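/- Let p be a prime and let e be the entry point of the Fibonacci sequence modulo p. Then for n = 2k, R_n^e ≡ (-1)^((k+1)e) F_{e-1} · I_n (mod p), and for n = 2k+1, R_n^e ≡ (-1)^(ke) · I_n (mod p). -/

import Mathlib

/-- `R n` over `ZMod p`: the `n × n` matrix whose 1-based `(i,j)` entry is `C(i-1, n-j)`. -/
def RmatMod (p n : ℕ) : Matrix (Fin n) (Fin n) (ZMod p) :=
  Matrix.of fun i j => (Nat.choose i.1 (n - 1 - j.1) : ZMod p)

/-!
`R_n` is the matrix of the `(n-1)`-st symmetric power of the Fibonacci matrix `Q = !![1, 1; 1, 0]`: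
its `i`-th row lists the coefficients of `(X₀ + X₁)^i X₀^(n-1-i)`, the image of
`X₀^i X₁^(n-1-i)` under the substitution `X ↦ Q X`. Symmetric powers respect products and
scalars, so `R_n^e` is the symmetric power of `Q^e = !![F_{e+1}, F_e; F_e, F_{e-1}]`, which is
`F_{e-1} • 1` modulo `p` when `p ∣ F_e`. Hence `R_n^e = F_{e-1}^(n-1) • 1`, and Cassini's
identity turns into `F_{e-1}^2 = (-1)^e`, which gives both parity formulas.
-/

open MvPolynomial

namespace Matrix

variable {R : Type*} [CommRing R]

noncomputable def columnForm {m : Type*} [Fintype m] (A : Matrix m m R) (t : m) :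
    MvPolynomial m R :=
  ∑ s, C (A s t) * X s

noncomputable def binaryMonomial (n j : ℕ) : Fin 2 →₀ ℕ :=
  Finsupp.single 0 j + Finsupp.single 1 (n - 1 - j)

/-- Row `i` holds the coordinates of the image of `X₀^i X₁^(n-1-i)` under `X ↦ A X`, so this
map is anti-multiplicative. -/
noncomputable def symPow (n : ℕ) (A : Matrix (Fin 2) (Fin 2) R) : Matrix (Fin n) (Fin n) R :=
  of fun i j =>
    coeff (binaryMonomial n j) (aeval (columnForm A) (monomial (binaryMonomial n i) (1 : R)))

section ColumnForm

variable {m : Type*} [Fintype m]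

theorem isHomogeneous_columnForm (A : Matrix m m R) (t : m) : (columnForm A t).IsHomogeneous 1 :=
  IsHomogeneous.sum _ _ _ fun s _ => (isHomogeneous_X R s).C_mul _

theorem aeval_columnForm_columnForm (M N : Matrix m m R) (t : m) :
    aeval (columnForm M) (columnForm N t) = columnForm (M * N) t := by
  simp only [columnForm, map_sum, map_mul, aeval_C, aeval_X, algebraMap_eq, mul_apply,
    Finset.mul_sum, Finset.sum_mul]
  rw [Finset.sum_comm]
  refine Finset.sum_congr rfl fun r _ => Finset.sum_congr rfl fun s _ => ?_
  ring

theorem aeval_columnForm_mul (M N : Matrix m m R) (f : MvPolynomial m R) :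
    aeval (columnForm (M * N)) f = aeval (columnForm M) (aeval (columnForm N) f) := by
  rw [comp_aeval_apply]
  simp only [aeval_columnForm_columnForm]

theorem columnForm_one [DecidableEq m] : columnForm (1 : Matrix m m R) = X := by
  ext1 t
  simp [columnForm, one_apply]

theorem columnForm_smul (c : R) (A : Matrix m m R) (t : m) :
    columnForm (c • A) t = C c * columnForm A t := by
  simp [columnForm, Finset.mul_sum, mul_assoc]

end ColumnForm

theorem binaryMonomial_apply_zero (n j : ℕ) : binaryMonomial n j 0 = j := by
  simp [binaryMonomial]

theorem binaryMonomial_apply_one (n j : ℕ) : binaryMonomial n j 1 = n - 1 - j := by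
  simp [binaryMonomial]

theorem binaryMonomial_injective (n : ℕ) : Function.Injective (binaryMonomial n) :=
  fun i j h => by simpa [binaryMonomial_apply_zero] using DFunLike.congr_fun h 0

theorem degree_binaryMonomial {n j : ℕ} (hj : j < n) : (binaryMonomial n j).degree = n - 1 := by
  rw [Finsupp.degree_eq_sum, Fin.sum_univ_two, binaryMonomial_apply_zero,
    binaryMonomial_apply_one]
  omega

theorem exists_binaryMonomial_eq {n : ℕ} {d : Fin 2 →₀ ℕ} (hn : n ≠ 0)
    (hd : d.degree = n - 1) :
    ∃ j : Fin n, binaryMonomial n j = d := by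
  rw [Finsupp.degree_eq_sum, Fin.sum_univ_two] at hd
  refine ⟨⟨d 0, by omega⟩, Finsupp.ext fun t => ?_⟩
  fin_cases t
  · simp [binaryMonomial]
  · simp [binaryMonomial]
    omega

theorem eq_sum_monomial_binaryMonomial {n : ℕ} {f : MvPolynomial (Fin 2) R}
    (hf : f.IsHomogeneous (n - 1)) (hn : n ≠ 0) :
    f = ∑ j : Fin n, monomial (binaryMonomial n j) (coeff (binaryMonomial n j) f) := by
  ext d
  simp only [coeff_sum, coeff_monomial]
  by_cases hd : ∃ j : Fin n, binaryMonomial n j = d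
  · obtain ⟨j, rfl⟩ := hd
    rw [Finset.sum_eq_single j (fun i _ hij => if_neg ((binaryMonomial_injective n).ne
      (Fin.val_injective.ne hij))) (by simp), if_pos rfl]
  · rw [Finset.sum_eq_zero fun j _ => if_neg fun h => hd ⟨j, h⟩]
    by_contra hcoeff
    exact hd (exists_binaryMonomial_eq hn (Finsupp.degree_eq_weight_one (R := ℕ) ▸ hf hcoeff))

theorem aeval_columnForm_monomial_eq_sum (A : Matrix (Fin 2) (Fin 2) R) {n : ℕ} (i : Fin n) :
    aeval (columnForm A) (monomial (binaryMonomial n i) (1 : R)) =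
      ∑ j : Fin n, monomial (binaryMonomial n j) (symPow n A i j) := by
  refine eq_sum_monomial_binaryMonomial ?_ (Fin.pos i).ne'
  simpa using (isHomogeneous_monomial (1 : R) (degree_binaryMonomial i.isLt)).aeval _
    (isHomogeneous_columnForm A)

theorem symPow_mul (n : ℕ) (M N : Matrix (Fin 2) (Fin 2) R) :
    symPow n (M * N) = symPow n N * symPow n M := by
  ext i j
  have hmonomial (l : Fin n) (c : R) :
      monomial (binaryMonomial n l) c = c • monomial (binaryMonomial n l) (1 : R) := by
    rw [smul_monomial, smul_eq_mul, mul_one]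
  rw [mul_apply, symPow, of_apply, aeval_columnForm_mul, aeval_columnForm_monomial_eq_sum N i]
  simp only [hmonomial _ (symPow n N i _), map_sum, map_smul, coeff_sum, coeff_smul, smul_eq_mul]
  rfl

theorem symPow_one (n : ℕ) : symPow n (1 : Matrix (Fin 2) (Fin 2) R) = 1 := by
  ext i j
  simp only [symPow, of_apply, columnForm_one, aeval_X_left_apply, coeff_monomial, one_apply,
    (binaryMonomial_injective n).eq_iff, Fin.val_inj]

theorem symPow_pow (n : ℕ) (A : Matrix (Fin 2) (Fin 2) R) (k : ℕ) :
    symPow n (A ^ k) = symPow n A ^ k := by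
  induction k with
  | zero => exact symPow_one n
  | succ k ih => rw [pow_succ, symPow_mul, ih, pow_succ']

theorem symPow_smul (n : ℕ) (c : R) (A : Matrix (Fin 2) (Fin 2) R) :
    symPow n (c • A) = c ^ (n - 1) • symPow n A := by
  ext i j
  have hscale : aeval (columnForm (c • A)) (monomial (binaryMonomial n i) (1 : R)) =
      C (c ^ (n - 1)) * aeval (columnForm A) (monomial (binaryMonomial n i) (1 : R)) := by
    have hsplit :
        (C c : MvPolynomial (Fin 2) R) ^ (n - 1) = C c ^ (i : ℕ) * C c ^ (n - 1 - i) := by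
      rw [← pow_add]
      congr 1
      omega
    simp only [columnForm_smul, monomial_fin_two, map_mul, map_pow, aeval_C, aeval_X,
      binaryMonomial_apply_zero, binaryMonomial_apply_one, mul_pow, hsplit]
    ring
  simp only [symPow, of_apply, smul_apply, smul_eq_mul, hscale, coeff_C_mul]

theorem coeff_binaryMonomial_add_pow_mul_X_pow {n i j : ℕ} (hi : i < n) (hj : j < n) :
    coeff (binaryMonomial n j) ((X 0 + X 1 : MvPolynomial (Fin 2) R) ^ i * X 0 ^ (n - 1 - i)) =
      (i.choose (n - 1 - j) : R) := by
  rw [X_pow_eq_monomial, coeff_mul_monomial']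
  split_ifs with hle
  · have hji : n - 1 - i ≤ j := by
      simpa [Finsupp.single_le_iff, binaryMonomial_apply_zero] using hle
    have hrow :
        (binaryMonomial n j - Finsupp.single (0 : Fin 2) (n - 1 - i)) 0 = i - (n - 1 - j) := by
      simp only [Finsupp.tsub_apply, binaryMonomial_apply_zero, Finsupp.single_eq_same]
      omega
    have hcol : (binaryMonomial n j - Finsupp.single (0 : Fin 2) (n - 1 - i)) 1 = n - 1 - j := by
      simp [binaryMonomial_apply_one]
    rw [coeff_add_pow, hrow, hcol, if_pos (by simp; omega), Nat.choose_symm (by omega), mul_one]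
  · have hji : ¬n - 1 - i ≤ j := by
      simpa [Finsupp.single_le_iff, binaryMonomial_apply_zero] using hle
    rw [Nat.choose_eq_zero_of_lt (by omega), Nat.cast_zero]

theorem symPow_fibMatrix (n : ℕ) :
    symPow n !![(1 : R), 1; 1, 0] = of fun i j : Fin n => (Nat.choose i (n - 1 - j) : R) := by
  ext i j
  simp only [symPow, of_apply, columnForm, monomial_fin_two, binaryMonomial_apply_zero,
    binaryMonomial_apply_one, map_mul, map_pow, map_one, one_mul, aeval_X,
    Fin.sum_univ_two, cons_val', cons_val_zero, cons_val_one, cons_val_fin_one, C_0,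
    zero_mul, add_zero]
  exact coeff_binaryMonomial_add_pow_mul_X_pow i.isLt j.isLt

theorem fibMatrix_pow_succ {S : Type*} [Semiring S] (m : ℕ) :
    !![(1 : S), 1; 1, 0] ^ (m + 1) =
      !![(Nat.fib (m + 2) : S), Nat.fib (m + 1); Nat.fib (m + 1), Nat.fib m] := by
  induction m with
  | zero => simp
  | succ m ih =>
    rw [pow_succ, ih]
    ext a b
    fin_cases a <;> fin_cases b <;> simp [Nat.fib_add_two, mul_apply] <;> abel

theorem symPow_fibMatrix_pow_of_fib_eq_zero (n : ℕ) {m : ℕ}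
    (hfib : (Nat.fib (m + 1) : R) = 0) :
    symPow n !![(1 : R), 1; 1, 0] ^ (m + 1) = (Nat.fib m : R) ^ (n - 1) • 1 := by
  have hpow : !![(1 : R), 1; 1, 0] ^ (m + 1) = (Nat.fib m : R) • 1 := by
    rw [fibMatrix_pow_succ, Nat.fib_add_two, Nat.cast_add, hfib, add_zero]
    ext a b
    fin_cases a <;> fin_cases b <;> simp
  rw [← symPow_pow, hpow, symPow_smul, symPow_one]

end Matrix

theorem Nat.fib_sq_eq_neg_one_pow_of_fib_succ_eq_zero {R : Type*} [CommRing R] {m : ℕ}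
    (hfib : (Nat.fib (m + 1) : R) = 0) : (Nat.fib m : R) ^ 2 = (-1) ^ (m + 1) := by
  have hcassini := Int.fib_succ_mul_fib_pred_sub_fib_sq (m + 1 : ℕ)
  rw [show ((m + 1 : ℕ) : ℤ) + 1 = (m + 2 : ℕ) by push_cast; ring,
    show ((m + 1 : ℕ) : ℤ) - 1 = m by push_cast; ring, Int.natAbs_natCast, Int.fib_natCast,
    Int.fib_natCast, Int.fib_natCast] at hcassini
  have hcassiniR := congrArg (Int.cast : ℤ → R) hcassini
  push_cast [Nat.fib_add_two, hfib] at hcassiniR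
  linear_combination hcassiniR

theorem RmatMod_eq_symPow (p n : ℕ) : RmatMod p n = Matrix.symPow n !![1, 1; 1, 0] :=
  (Matrix.symPow_fibMatrix n).symm

theorem Rmat_pow_entry_point_parity (p e : ℕ)
    (he : 0 < e) (hdvd : p ∣ Nat.fib e) (k : ℕ) :
    RmatMod p (2 * k) ^ e =
        (((-1 : ZMod p) ^ ((k + 1) * e) * (Nat.fib (e - 1) : ZMod p)) •
          (1 : Matrix (Fin (2 * k)) (Fin (2 * k)) (ZMod p))) ∧
      RmatMod p (2 * k + 1) ^ e =
        (((-1 : ZMod p) ^ (k * e)) •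
          (1 : Matrix (Fin (2 * k + 1)) (Fin (2 * k + 1)) (ZMod p))) := by
  obtain ⟨m, rfl⟩ := Nat.exists_eq_add_one_of_ne_zero he.ne'
  have hfib : (Nat.fib (m + 1) : ZMod p) = 0 := (ZMod.natCast_eq_zero_iff _ _).2 hdvd
  have hsq := Nat.fib_sq_eq_neg_one_pow_of_fib_succ_eq_zero hfib
  simp only [RmatMod_eq_symPow, Matrix.symPow_fibMatrix_pow_of_fib_eq_zero _ hfib,
    Nat.add_sub_cancel]
  constructor
  · rcases k with _ | k
    · exact Matrix.ext fun i => Fin.elim0 i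
    · congr 1
      calc (Nat.fib m : ZMod p) ^ (2 * (k + 1) - 1)
          _ = ((Nat.fib m : ZMod p) ^ 2) ^ k * Nat.fib m := by
            rw [show 2 * (k + 1) - 1 = 2 * k + 1 by omega, pow_succ, pow_mul]
          _ = (-1) ^ ((k + 1 + 1) * (m + 1)) * Nat.fib m := by
            rw [hsq, ← pow_mul, show (k + 1 + 1) * (m + 1) = (m + 1) * k + 2 * (m + 1) by ring,
              pow_add, (even_two_mul _).neg_one_pow, mul_one]
  · rw [pow_mul, hsq, ← pow_mul, mul_comm (m + 1)]
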